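/- Let (A, {•,•}_J) be a Jacobi algebra over a field k and (A, 𝒥¹(A)) its canonical Lie–Rinehart algebra. The map γ : A ⊗ A → A, a ⊗ b ↦ {a,b}_J, vanishes on I² (where I = Ker of multiplication), hence descends to a well-defined map φ : 𝒥¹(A) → A with φ(a·j¹(b)) = {a,b}_J. -/

import Mathlib

open TensorProduct

/-!
Write `g s = 1 ⊗ s - s ⊗ 1`. The ideal `I = ker (A ⊗ A → A)` is spanned, as a module over `A`
acting on the left factor, by the `g s`, so `I²` is spanned by the
`c • (g s * g t) = c ⊗ st - cs ⊗ t - ct ⊗ s + cst ⊗ 1`. The Leibniz rule in both arguments,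
together with skew-symmetry, shows that `J` kills each of these combinations.
-/

def LinearMap.mk₂OfSMulAdd {R M N P : Type*} [CommSemiring R] [AddCommMonoid M] [Module R M]
    [AddCommMonoid N] [Module R N] [AddCommGroup P] [Module R P] (J : M → N → P)
    (hₗ : ∀ (r : R) (a a' : M) (b : N), J (r • a + a') b = r • J a b + J a' b)
    (hᵣ : ∀ (r : R) (a : M) (b b' : N), J a (r • b + b') = r • J a b + J a b') :
    M →ₗ[R] N →ₗ[R] P :=
  have add_left a a' b : J (a + a') b = J a b + J a' b := by simpa using hₗ 1 a a' b
  have add_right a b b' : J a (b + b') = J a b + J a b' := by simpa using hᵣ 1 a b b'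
  have zero_left b : J 0 b = 0 := by simpa using add_left 0 0 b
  have zero_right a : J a 0 = 0 := by simpa using add_right a 0 0
  LinearMap.mk₂ R J add_left (fun r a b => by simpa [zero_left] using hₗ r a 0 b)
    add_right (fun r a b => by simpa [zero_right] using hᵣ r a b 0)

theorem Submodule.exists_liftQ_restrictScalars {R S M N : Type*} [Ring R] [Ring S]
    [SMul R S] [AddCommGroup M] [Module R M] [Module S M] [IsScalarTower R S M]
    [AddCommGroup N] [Module R N] (p : Submodule S M) (f : M →ₗ[R] N)
    (hf : ∀ x ∈ p, f x = 0) :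
    ∃ g : (M ⧸ p) →ₗ[R] N, ∀ x, g (Submodule.Quotient.mk x) = f x :=
  ⟨(p.restrictScalars R).liftQ f hf ∘ₗ (Submodule.Quotient.restrictScalarsEquiv R p).symm,
    fun _ => rfl⟩

section Leibniz

variable {A : Type*} [CommRing A] {J : A → A → A}

theorem leibniz_right_of_skew (hskew : ∀ a b, J a b = - J b a)
    (hleib : ∀ a b c, J (a * b) c = a * J b c + b * J a c - a * b * J 1 c) (a b c : A) :
    J a (b * c) = b * J a c + c * J a b - b * c * J a 1 := by
  linear_combination hskew a (b * c) - hleib b c a - b * hskew a c - c * hskew a b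
    + b * c * hskew a 1

theorem apply_kaehler_sq_generator_eq_zero (hskew : ∀ a b, J a b = - J b a)
    (hleib : ∀ a b c, J (a * b) c = a * J b c + b * J a c - a * b * J 1 c) (c s t : A) :
    J c (s * t) - J (c * s) t - J (c * t) s + J (c * (s * t)) 1 = 0 := by
  linear_combination leibniz_right_of_skew hskew hleib c s t - hleib c s t - hleib c t s
    + hleib c (s * t) 1 + c * hleib s t 1 - c * hskew s t + c * s * hskew t 1
    + c * t * hskew s 1 - c * s * t * hskew 1 1

end Leibniz

namespace KaehlerDifferential

open scoped Pointwise

variable {k A : Type*} [CommRing k] [CommRing A] [Algebra k A]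

theorem smul_mul_one_tmul_sub_tmul_one (c s t : A) :
    c • (((1 : A) ⊗ₜ[k] s - s ⊗ₜ[k] 1) * ((1 : A) ⊗ₜ[k] t - t ⊗ₜ[k] 1)) =
      c ⊗ₜ (s * t) - (c * s) ⊗ₜ t - (c * t) ⊗ₜ s + (c * (s * t)) ⊗ₜ 1 := by
  simp only [sub_mul, mul_sub, Algebra.TensorProduct.tmul_mul_tmul, smul_sub,
    TensorProduct.smul_tmul', smul_eq_mul, mul_one, one_mul]
  abel

theorem restrictScalars_ideal_sq :
    (ideal k A ^ 2).restrictScalars A = Submodule.span A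
      ((Set.range fun s : A => (1 : A) ⊗ₜ[k] s - s ⊗ₜ[k] 1) *
        Set.range fun s : A => (1 : A) ⊗ₜ[k] s - s ⊗ₜ[k] 1) := by
  rw [Submodule.restrictScalars_pow two_ne_zero, ← submodule_span_range_eq_ideal, pow_two,
    Submodule.span_mul_span]

theorem map_eq_zero_of_mem_ideal_sq {M : Type*} [AddCommGroup M] [Module k M]
    (γ : A ⊗[k] A →ₗ[k] M)
    (hγ : ∀ c s t : A, γ (c ⊗ₜ (s * t) - (c * s) ⊗ₜ t - (c * t) ⊗ₜ s + (c * (s * t)) ⊗ₜ 1) = 0)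
    {x : A ⊗[k] A} (hx : x ∈ ideal k A ^ 2) : γ x = 0 := by
  rw [← Submodule.restrictScalars_mem A, restrictScalars_ideal_sq] at hx
  suffices ∀ c : A, γ (c • x) = 0 by simpa using this 1
  induction hx using Submodule.span_induction with
  | mem y hy =>
    obtain ⟨_, ⟨s, rfl⟩, _, ⟨t, rfl⟩, rfl⟩ := hy
    intro c
    rw [smul_mul_one_tmul_sub_tmul_one]
    exact hγ c s t
  | zero => simp
  | add y z _ _ hy hz => simp [hy, hz]
  | smul a y _ hy => simp [smul_smul, hy]

end KaehlerDifferential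

theorem jacobi_connection_well_defined_general
    (k A : Type*) [Field k] [CommRing A] [Algebra k A]
    (J : A → A → A)
    (hbilₗ : ∀ (r : k) (a a' b : A), J (r • a + a') b = r • J a b + J a' b)
    (hbilᵣ : ∀ (r : k) (a b b' : A), J a (r • b + b') = r • J a b + J a b')
    (hskew : ∀ a b, J a b = - J b a)
    (hleib : ∀ a b c, J (a * b) c = a * J b c + b * J a c - a * b * J 1 c) :
    ∃ γ : A ⊗[k] A →ₗ[k] A,
      (∀ a b : A, γ (a ⊗ₜ[k] b) = J a b) ∧
      (∀ x ∈ (KaehlerDifferential.ideal k A ^ 2 : Ideal (A ⊗[k] A)), γ x = 0) ∧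
      (letI Q := (A ⊗[k] A) ⧸ (KaehlerDifferential.ideal k A ^ 2)
       letI π : A ⊗[k] A → Q := Ideal.Quotient.mk (KaehlerDifferential.ideal k A ^ 2)
       letI j1 : A → Q := fun a => π ((1 : A) ⊗ₜ[k] a)
       ∃ φ : Q →ₗ[k] A,
        (∀ x : A ⊗[k] A, φ (π x) = γ x) ∧
        (∀ a b : A, φ (a • j1 b) = J a b)) := by
  let γ := TensorProduct.lift (LinearMap.mk₂OfSMulAdd J hbilₗ hbilᵣ)
  have hγ (a b : A) : γ (a ⊗ₜ b) = J a b := rfl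
  have hvanish (x) (hx : x ∈ KaehlerDifferential.ideal k A ^ 2) : γ x = 0 :=
    KaehlerDifferential.map_eq_zero_of_mem_ideal_sq γ
      (fun c s t => by simpa only [map_add, map_sub, hγ] using apply_kaehler_sq_generator_eq_zero hskew hleib c s t) hx
  obtain ⟨φ, hφ⟩ := Submodule.exists_liftQ_restrictScalars _ γ hvanish
  refine ⟨γ, hγ, hvanish, φ, hφ, fun a b => ?_⟩
  change φ (a • Submodule.Quotient.mk ((1 : A) ⊗ₜ[k] b)) = J a b
  rw [← Submodule.Quotient.mk_smul, TensorProduct.smul_tmul', smul_eq_mul, mul_one, hφ, hγ]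

/-- For a Jacobi algebra `(A, J)` over a field `k`, the map
`γ : A ⊗ A → A`, `a ⊗ b ↦ J a b`, vanishes on `I²` and hence descends to a
well-defined map `φ : 𝒥¹(A) → A` with `φ (a • j¹ b) = J a b`. -/
theorem jacobi_connection_well_defined
    (k A : Type*) [Field k] [CommRing A] [Algebra k A]
    (J : A → A → A)
    (hbilₗ : ∀ (r : k) (a a' b : A), J (r • a + a') b = r • J a b + J a' b)
    (hbilᵣ : ∀ (r : k) (a b b' : A), J a (r • b + b') = r • J a b + J a b')
    (hskew : ∀ a b, J a b = - J b a)
    (hjacobi : ∀ a b c, J a (J b c) + J b (J c a) + J c (J a b) = 0)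
    (hleib : ∀ a b c, J (a * b) c = a * J b c + b * J a c - a * b * J 1 c) :
    ∃ γ : A ⊗[k] A →ₗ[k] A,
      (∀ a b : A, γ (a ⊗ₜ[k] b) = J a b) ∧
      (∀ x ∈ (KaehlerDifferential.ideal k A ^ 2 : Ideal (A ⊗[k] A)), γ x = 0) ∧
      (letI Q := (A ⊗[k] A) ⧸ (KaehlerDifferential.ideal k A ^ 2)
       letI π : A ⊗[k] A → Q := Ideal.Quotient.mk (KaehlerDifferential.ideal k A ^ 2)
       letI j1 : A → Q := fun a => π ((1 : A) ⊗ₜ[k] a)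
       ∃ φ : Q →ₗ[k] A,
        (∀ x : A ⊗[k] A, φ (π x) = γ x) ∧
        (∀ a b : A, φ (a • j1 b) = J a b)) :=
  jacobi_connection_well_defined_general k A J hbilₗ hbilᵣ hskew hleib
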